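/- arXiv:2511.02763 — 2 statements merged into one kernel-verified Lean document; each statement's English description precedes it below -/
import Mathlib

section
/- Let φ(x) = ∫_x^∞ (1 − F(u)) du for a CDF F with E[X_+] < ∞ and M = sup{x : F(x) < 1}, let 0 ≤ μ₀ < M and λ > 0, and let μ(t) solve μ'(t) = λφ(μ(t)), μ(0) = μ₀. Then μ is defined for all t ≥ 0, is strictly increasing, strictly concave, continuously differentiable, and satisfies lim_{t→∞} μ(t) = M. -/
open MeasureTheory ProbabilityTheory Set Filter Topology

/-!
Write ν for the law of `X`, so that `F` is the cdf of ν and `φ x = ∫_x^∞ ν (u, ∞) du`. Splitting the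
integral at a point shows that `φ` is nonnegative, antitone and 1-Lipschitz, strictly decreasing and
positive on `(-∞, M)`, and that `φ x ≤ M - x` when `M` is finite. As long as `μ < M` its derivative
`λ φ(μ)` is therefore positive and strictly decreasing in `t`, which gives strict monotonicity and
strict concavity. A finite `M` is never reached because `φ x ≤ M - x` makes `M - μ` decay at most
exponentially, and `μ` cannot stay below any `x < M` because then `μ' ≥ λ φ(x) > 0`.
-/

noncomputable def tailIntegral (ν : Measure ℝ) (x : ℝ) : ℝ := ∫ u in Ioi x, (1 - cdf ν u)

noncomputable def rightEndpoint (ν : Measure ℝ) : EReal :=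
  sSup ((fun x : ℝ => (x : EReal)) '' {x | cdf ν x < 1})

section TailIntegral

variable {ν : Measure ℝ} {a b x : ℝ}

theorem coe_lt_rightEndpoint_iff : (x : EReal) < rightEndpoint ν ↔ ∃ y, x < y ∧ cdf ν y < 1 := by
  simp only [rightEndpoint, lt_sSup_iff, mem_image, mem_ofPred_eq]
  constructor
  · rintro ⟨_, ⟨y, hy, rfl⟩, hxy⟩
    exact ⟨y, EReal.coe_lt_coe_iff.1 hxy, hy⟩
  · rintro ⟨y, hxy, hy⟩
    exact ⟨y, ⟨y, hy, rfl⟩, EReal.coe_lt_coe_iff.2 hxy⟩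

theorem cdf_eq_one_of_rightEndpoint_lt (hx : rightEndpoint ν < x) : cdf ν x = 1 :=
  (cdf_le_one ν x).eq_of_not_lt fun h => hx.not_ge (le_sSup ⟨x, h, rfl⟩)

theorem tailIntegral_nonneg (x : ℝ) : 0 ≤ tailIntegral ν x :=
  setIntegral_nonneg measurableSet_Ioi fun u _ => sub_nonneg.2 (cdf_le_one ν u)

theorem setIntegral_Ioc_one_sub_cdf_le (hab : a ≤ b) : ∫ u in Ioc a b, (1 - cdf ν u) ≤ b - a :=
  calc ∫ u in Ioc a b, (1 - cdf ν u) ≤ ∫ _ in Ioc a b, (1 : ℝ) :=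
        integral_mono_of_nonneg (ae_of_all _ fun u => sub_nonneg.2 (cdf_le_one ν u))
          (integrableOn_const measure_Ioc_lt_top.ne)
          (ae_of_all _ fun u => sub_le_self 1 (cdf_nonneg ν u))
    _ = b - a := by rw [setIntegral_const, Real.volume_real_Ioc_of_le hab, smul_eq_mul, mul_one]

variable [IsProbabilityMeasure ν]

theorem one_sub_cdf_eq_measureReal_Ioi (u : ℝ) : 1 - cdf ν u = ν.real (Ioi u) := by
  rw [cdf_eq_real, ← compl_Iic, probReal_compl_eq_one_sub measurableSet_Iic]

theorem integrableOn_one_sub_cdf (hν : Integrable (fun x => max x 0) ν) (x : ℝ) :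
    IntegrableOn (fun u => 1 - cdf ν u) (Ioi x) := by
  have hanti : Antitone fun u => 1 - cdf ν u := fun u v huv =>
    sub_le_sub_left (monotone_cdf ν huv) 1
  have hpos : IntegrableOn (fun u => 1 - cdf ν u) (Ioi 0) := by
    -- layer cake: `∫⁻ u in Ioi 0, ν (Ioi u)` is the first moment of the positive part
    have hlayer := lintegral_eq_lintegral_meas_lt ν (ae_of_all _ fun x => le_max_right x 0)
      (measurable_id.max measurable_const).aemeasurable
    have hIoi : ∀ u ∈ Ioi (0 : ℝ), ν {x | u < max x 0} = ν (Ioi u) := fun u hu => by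
      congr 1; ext x
      simp only [mem_ofPred_eq, lt_max_iff, mem_Ioi, or_iff_left (lt_asymm (mem_Ioi.1 hu))]
    rw [setLIntegral_congr_fun measurableSet_Ioi hIoi] at hlayer
    have hfin : ∫⁻ u in Ioi (0 : ℝ), ν (Ioi u) ≠ ⊤ := hlayer ▸ hν.lintegral_lt_top.ne
    simp only [one_sub_cdf_eq_measureReal_Ioi]
    exact integrable_toReal_of_lintegral_ne_top
      (Antitone.measurable fun _ _ h => measure_mono (Ioi_subset_Ioi h)).aemeasurable hfin
  have hIcc : IntegrableOn (fun u => 1 - cdf ν u) (Icc x 0) :=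
    (hanti.antitoneOn _).integrableOn_isCompact isCompact_Icc
  refine (hIcc.union hpos).mono_set fun u hu => ?_
  rcases le_or_gt u 0 with h | h
  · exact Or.inl ⟨(mem_Ioi.1 hu).le, h⟩
  · exact Or.inr h

theorem tailIntegral_eq_setIntegral_Ioc_add (hν : Integrable (fun x => max x 0) ν) (hab : a ≤ b) :
    tailIntegral ν a = (∫ u in Ioc a b, (1 - cdf ν u)) + tailIntegral ν b := by
  rw [tailIntegral, tailIntegral, ← Ioc_union_Ioi_eq_Ioi hab,
    setIntegral_union Ioc_disjoint_Ioi_same measurableSet_Ioi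
      ((integrableOn_one_sub_cdf hν a).mono_set Ioc_subset_Ioi_self)
      (integrableOn_one_sub_cdf hν b)]

theorem mul_one_sub_cdf_le_setIntegral_Ioc (hν : Integrable (fun x => max x 0) ν) (hab : a ≤ b) :
    (b - a) * (1 - cdf ν b) ≤ ∫ u in Ioc a b, (1 - cdf ν u) :=
  calc (b - a) * (1 - cdf ν b) = ∫ _ in Ioc a b, (1 - cdf ν b) := by
        rw [setIntegral_const, Real.volume_real_Ioc_of_le hab, smul_eq_mul]
    _ ≤ ∫ u in Ioc a b, (1 - cdf ν u) :=
        setIntegral_mono_on (integrableOn_const measure_Ioc_lt_top.ne)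
          ((integrableOn_one_sub_cdf hν a).mono_set Ioc_subset_Ioi_self) measurableSet_Ioc
          fun u hu => sub_le_sub_left (monotone_cdf ν hu.2) 1

theorem antitone_tailIntegral (hν : Integrable (fun x => max x 0) ν) : Antitone (tailIntegral ν) :=
  fun a b hab => by
    rw [tailIntegral_eq_setIntegral_Ioc_add hν hab]
    exact le_add_of_nonneg_left
      (setIntegral_nonneg measurableSet_Ioc fun u _ => sub_nonneg.2 (cdf_le_one ν u))

theorem strictAntiOn_tailIntegral (hν : Integrable (fun x => max x 0) ν) :
    StrictAntiOn (tailIntegral ν) {x | (x : EReal) < rightEndpoint ν} := by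
  intro a _ b hb hab
  obtain ⟨y, hby, hy⟩ := coe_lt_rightEndpoint_iff.1 hb
  have hgap : 0 < (b - a) * (1 - cdf ν b) :=
    mul_pos (sub_pos.2 hab) (sub_pos.2 ((monotone_cdf ν hby.le).trans_lt hy))
  rw [tailIntegral_eq_setIntegral_Ioc_add hν hab.le]
  linarith [mul_one_sub_cdf_le_setIntegral_Ioc hν hab.le]

theorem tailIntegral_pos (hν : Integrable (fun x => max x 0) ν)
    (hx : (x : EReal) < rightEndpoint ν) : 0 < tailIntegral ν x := by
  obtain ⟨y, hxy, hy⟩ := coe_lt_rightEndpoint_iff.1 hx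
  have hgap : 0 < (y - x) * (1 - cdf ν y) := mul_pos (sub_pos.2 hxy) (sub_pos.2 hy)
  rw [tailIntegral_eq_setIntegral_Ioc_add hν hxy.le]
  linarith [mul_one_sub_cdf_le_setIntegral_Ioc hν hxy.le, tailIntegral_nonneg (ν := ν) y]

theorem lipschitzWith_tailIntegral (hν : Integrable (fun x => max x 0) ν) :
    LipschitzWith 1 (tailIntegral ν) :=
  LipschitzWith.of_le_add_mul 1 fun x y => by
    rw [NNReal.coe_one, one_mul]
    rcases le_total x y with hxy | hyx
    · rw [tailIntegral_eq_setIntegral_Ioc_add hν hxy, Real.dist_eq,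
        abs_of_nonpos (sub_nonpos.2 hxy)]
      linarith [setIntegral_Ioc_one_sub_cdf_le (ν := ν) hxy]
    · linarith [antitone_tailIntegral hν hyx, dist_nonneg (x := x) (y := y)]

theorem tailIntegral_le_sub (hν : Integrable (fun x => max x 0) ν) {m : ℝ}
    (hm : rightEndpoint ν = m) (hx : x ≤ m) : tailIntegral ν x ≤ m - x := by
  have hzero : tailIntegral ν m = 0 := by
    rw [tailIntegral, setIntegral_congr_fun measurableSet_Ioi (g := fun _ => 0) fun u hu => ?_,
      integral_zero]
    rw [cdf_eq_one_of_rightEndpoint_lt (hm ▸ EReal.coe_lt_coe_iff.2 hu), sub_self]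
  rw [tailIntegral_eq_setIntegral_Ioc_add hν hx, hzero, add_zero]
  exact setIntegral_Ioc_one_sub_cdf_le hx

end TailIntegral

theorem image_lt_of_hasDerivAt_le_mul_sub {f f' : ℝ → ℝ} {m c : ℝ}
    (hf : ∀ t, 0 ≤ t → HasDerivAt f (f' t) t)
    (hbound : ∀ t, 0 ≤ t → f t < m → f' t ≤ c * (m - f t)) (h0 : f 0 < m) {t : ℝ} (ht : 0 ≤ t) :
    f t < m := by
  -- `B` solves `B' = (c + 1) (m - B)`, so its derivative beats the bound on `f'` strictly
  set B : ℝ → ℝ := fun s => m - (m - f 0) * Real.exp (-(c + 1) * s)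
  have hB : ∀ s, HasDerivAt B ((c + 1) * ((m - f 0) * Real.exp (-(c + 1) * s))) s := fun s => by
    have := ((((hasDerivAt_id s).const_mul (-(c + 1))).exp).const_mul (m - f 0)).const_sub m
    simp only [id, mul_one] at this
    exact this.congr_deriv (by ring)
  have hgap : ∀ s, 0 < (m - f 0) * Real.exp (-(c + 1) * s) := fun s =>
    mul_pos (sub_pos.2 h0) (Real.exp_pos _)
  have hBm : ∀ s, B s < m := fun s => sub_lt_self m (hgap s)
  have hle : f t ≤ B t := by
    refine image_le_of_deriv_right_lt_deriv_boundary (a := 0)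
      (fun s hs => (hf s hs.1).continuousAt.continuousWithinAt)
      (fun s hs => (hf s hs.1).hasDerivWithinAt) (by simp [B]) hB (fun s hs hfs => ?_) ⟨ht, le_rfl⟩
    calc f' s ≤ c * (m - f s) := hbound s hs.1 (hfs ▸ hBm s)
      _ = c * ((m - f 0) * Real.exp (-(c + 1) * s)) := by rw [hfs, sub_sub_cancel]
      _ < (c + 1) * ((m - f 0) * Real.exp (-(c + 1) * s)) := by linarith [hgap s]
  exact hle.trans_lt (hBm t)

theorem exists_lt_image_of_le_deriv {f f' : ℝ → ℝ} {x δ : ℝ} (hδ : 0 < δ)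
    (hf : ∀ t, 0 ≤ t → HasDerivAt f (f' t) t) (hf' : ∀ t, 0 ≤ t → f t ≤ x → δ ≤ f' t) :
    ∃ t, 0 ≤ t ∧ x < f t := by
  by_contra! hle
  set T := max 0 ((x - f 0 + 1) / δ)
  have hT₀ : 0 ≤ T := le_max_left _ _
  have hT : x - f 0 + 1 ≤ δ * T := (div_le_iff₀' hδ).1 (le_max_right _ _)
  have hgrow : δ * (T - 0) ≤ f T - f 0 :=
    (convex_Ici 0).mul_sub_le_image_sub_of_le_deriv
      (fun s hs => (hf s hs).continuousAt.continuousWithinAt)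
      (fun s hs => (hf s (interior_subset hs)).differentiableAt.differentiableWithinAt)
      (fun s hs => (hf s (interior_subset hs)).deriv ▸
        hf' s (interior_subset hs) (hle s (interior_subset hs)))
      0 self_mem_Ici T hT₀ hT₀
  linarith [hle T hT₀]

theorem tendsto_coe_atTop_of_monotoneOn {f : ℝ → ℝ} {M : EReal} (hf : MonotoneOn f (Ici 0))
    (hle : ∀ t, 0 ≤ t → (f t : EReal) ≤ M) (hlt : ∀ x : ℝ, (x : EReal) < M → ∃ t, 0 ≤ t ∧ x < f t) :
    Tendsto (fun t => (f t : EReal)) atTop (𝓝 M) := by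
  refine tendsto_order.2 ⟨fun a ha => ?_, fun a ha => ?_⟩
  · obtain ⟨x, hax, hxM⟩ := EReal.lt_iff_exists_real_btwn.1 ha
    obtain ⟨t₀, ht₀, hx⟩ := hlt x hxM
    filter_upwards [eventually_ge_atTop t₀] with t ht
    exact hax.trans (EReal.coe_lt_coe_iff.2 (hx.trans_le (hf ht₀ (ht₀.trans ht) ht)))
  · filter_upwards [eventually_ge_atTop 0] with t ht
    exact (hle t ht).trans_lt ha

section TailODE

variable {ν : Measure ℝ} [IsProbabilityMeasure ν] {lam : ℝ} {μ : ℝ → ℝ}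

theorem coe_lt_rightEndpoint_of_hasDerivAt (hν : Integrable (fun x => max x 0) ν) (hlam : 0 ≤ lam)
    (hode : ∀ t, 0 ≤ t → HasDerivAt μ (lam * tailIntegral ν (μ t)) t)
    (h0 : (μ 0 : EReal) < rightEndpoint ν) {t : ℝ} (ht : 0 ≤ t) :
    (μ t : EReal) < rightEndpoint ν := by
  generalize hM : rightEndpoint ν = M at h0 ⊢
  induction M using EReal.rec with
  | bot => exact absurd h0 not_lt_bot
  | top => exact EReal.coe_lt_top _
  | coe m =>
    refine EReal.coe_lt_coe_iff.2 (image_lt_of_hasDerivAt_le_mul_sub (c := lam) hode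
      (fun s _ hsm => ?_) (EReal.coe_lt_coe_iff.1 h0) ht)
    exact mul_le_mul_of_nonneg_left (tailIntegral_le_sub hν hM hsm.le) hlam

theorem exists_lt_of_hasDerivAt (hν : Integrable (fun x => max x 0) ν) (hlam : 0 < lam)
    (hode : ∀ t, 0 ≤ t → HasDerivAt μ (lam * tailIntegral ν (μ t)) t) {x : ℝ}
    (hx : (x : EReal) < rightEndpoint ν) : ∃ t, 0 ≤ t ∧ x < μ t :=
  exists_lt_image_of_le_deriv (mul_pos hlam (tailIntegral_pos hν hx)) hode fun _ _ hμx =>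
    mul_le_mul_of_nonneg_left (antitone_tailIntegral hν hμx) hlam.le

theorem strictMonoOn_of_hasDerivAt (hν : Integrable (fun x => max x 0) ν) (hlam : 0 < lam)
    (hode : ∀ t, 0 ≤ t → HasDerivAt μ (lam * tailIntegral ν (μ t)) t)
    (h0 : (μ 0 : EReal) < rightEndpoint ν) : StrictMonoOn μ (Ici 0) := by
  refine strictMonoOn_of_deriv_pos (convex_Ici 0)
    (fun t ht => (hode t ht).continuousAt.continuousWithinAt) fun t ht => ?_
  rw [interior_Ici] at ht
  rw [(hode t (le_of_lt ht)).deriv]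
  exact mul_pos hlam
    (tailIntegral_pos hν (coe_lt_rightEndpoint_of_hasDerivAt hν hlam.le hode h0 (le_of_lt ht)))

theorem strictConcaveOn_of_hasDerivAt (hν : Integrable (fun x => max x 0) ν) (hlam : 0 < lam)
    (hode : ∀ t, 0 ≤ t → HasDerivAt μ (lam * tailIntegral ν (μ t)) t)
    (h0 : (μ 0 : EReal) < rightEndpoint ν) : StrictConcaveOn ℝ (Ici 0) μ := by
  have hμM {t : ℝ} (ht : 0 ≤ t) := coe_lt_rightEndpoint_of_hasDerivAt hν hlam.le hode h0 ht
  refine StrictAntiOn.strictConcaveOn_of_deriv (convex_Ici 0)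
    (fun t ht => (hode t ht).continuousAt.continuousWithinAt) ?_
  rw [interior_Ici]
  intro s (hs : 0 < s) t (ht : 0 < t) hst
  rw [(hode s hs.le).deriv, (hode t ht.le).deriv]
  exact mul_lt_mul_of_pos_left (strictAntiOn_tailIntegral hν (hμM hs.le) (hμM ht.le)
    (strictMonoOn_of_hasDerivAt hν hlam hode h0 hs.le ht.le hst)) hlam

end TailODE

theorem stmt6_general {Ω : Type*} [MeasurableSpace Ω] (P : Measure Ω) [IsProbabilityMeasure P]
    (X : Ω → ℝ) (hX : Measurable X)
    (hint : Integrable (fun ω => max (X ω) 0) P)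
    (F : ℝ → ℝ) (hF : ∀ x, F x = (P {ω | X ω ≤ x}).toReal)
    (M : EReal) (hM : M = sSup ((fun x : ℝ => (x : EReal)) '' {x : ℝ | F x < 1}))
    (φ : ℝ → ℝ) (hφ : ∀ x, φ x = ∫ u in Ioi x, (1 - F u))
    (lam μ₀ : ℝ) (hlam : 0 < lam) (hμ₀M : (μ₀ : EReal) < M)
    (μ : ℝ → ℝ) (hinit : μ 0 = μ₀)
    (hode : ∀ t : ℝ, 0 ≤ t → HasDerivAt μ (lam * φ (μ t)) t) :
    StrictMonoOn μ (Ici 0) ∧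
    StrictConcaveOn ℝ (Ici 0) μ ∧
    ContinuousOn (fun t => lam * φ (μ t)) (Ici 0) ∧
    Tendsto (fun t => (μ t : EReal)) atTop (nhds M) := by
  have := Measure.isProbabilityMeasure_map (μ := P) hX.aemeasurable
  have hFν : F = cdf (P.map X) := funext fun x => by
    rw [hF, cdf_eq_real, map_measureReal_apply hX measurableSet_Iic]; rfl
  subst hFν hinit
  obtain rfl : φ = tailIntegral (P.map X) := funext hφ
  obtain rfl : M = rightEndpoint (P.map X) := hM
  have hν : Integrable (fun x => max x 0) (P.map X) :=
    (integrable_map_measure (by fun_prop) hX.aemeasurable).2 hint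
  have hmono := strictMonoOn_of_hasDerivAt hν hlam hode hμ₀M
  have hcont : ContinuousOn μ (Ici 0) := fun t ht => (hode t ht).continuousAt.continuousWithinAt
  have hμle (t : ℝ) (ht : 0 ≤ t) := (coe_lt_rightEndpoint_of_hasDerivAt hν hlam.le hode hμ₀M ht).le
  exact ⟨hmono, strictConcaveOn_of_hasDerivAt hν hlam hode hμ₀M,
    continuousOn_const.mul ((lipschitzWith_tailIntegral hν).continuous.comp_continuousOn hcont),
    tendsto_coe_atTop_of_monotoneOn hmono.monotoneOn hμle fun _ hx =>
      exists_lt_of_hasDerivAt hν hlam hode hx⟩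

/-- the solution μ of μ' = λφ(μ), μ(0) = μ₀ (defined for all t ≥ 0) is strictly
increasing, strictly concave, continuously differentiable, and μ(t) → M as t → ∞. -/
theorem stmt6 {Ω : Type*} [MeasurableSpace Ω] (P : Measure Ω) [IsProbabilityMeasure P]
    (X : Ω → ℝ) (hX : Measurable X)
    (hint : Integrable (fun ω => max (X ω) 0) P)
    (F : ℝ → ℝ) (hF : ∀ x, F x = (P {ω | X ω ≤ x}).toReal)
    (M : EReal) (hM : M = sSup ((fun x : ℝ => (x : EReal)) '' {x : ℝ | F x < 1}))
    (φ : ℝ → ℝ) (hφ : ∀ x, φ x = ∫ u in Ioi x, (1 - F u))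
    (lam μ₀ : ℝ) (hlam : 0 < lam) (hμ₀ : 0 ≤ μ₀) (hμ₀M : (μ₀ : EReal) < M)
    (μ : ℝ → ℝ) (hinit : μ 0 = μ₀)
    (hode : ∀ t : ℝ, 0 ≤ t → HasDerivAt μ (lam * φ (μ t)) t) :
    StrictMonoOn μ (Ici 0) ∧
    StrictConcaveOn ℝ (Ici 0) μ ∧
    ContinuousOn (fun t => lam * φ (μ t)) (Ici 0) ∧
    Tendsto (fun t => (μ t : EReal)) atTop (nhds M) :=
  stmt6_general P X hX hint F hF M hM φ hφ lam μ₀ hlam hμ₀M μ hinit hode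
end

section
/- Assume M = +∞ and lim_{x→∞} φ(x) / ∫_x^∞ φ(u)du = c > 0, where φ(x) = ∫_x^∞(1−F(u))du (assumed integrable at +∞). Then lim_{x→∞} φ(x)·∫_{μ₀}^x du/φ(u) = 1/c; consequently, if μ solves μ' = λφ(μ), μ(0)=μ₀, then lim_{t→∞} t·μ'(t) = 1/c and lim_{t→∞} μ(t)/ln t = 1/c. -/
open MeasureTheory Set Filter Topology

/-!
Write `Ψ x = ∫_x^∞ φ`, so that `Ψ' = -φ` and `φ / Ψ → c`. By l'Hôpital's rule in its `∞/∞`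
form, applied to `∫_{μ₀}^x 1/φ` against `1/Ψ`, whose derivatives have ratio `(Ψ/φ)² → 1/c²`,
we get `Ψ(x) ∫_{μ₀}^x 1/φ → 1/c²`, and multiplying by `φ/Ψ → c` gives the first limit.
Separating variables in `μ' = λ φ(μ)` gives `∫_{μ₀}^{μ t} 1/φ = λ t`, hence `μ → ∞` and
`t μ'(t) = φ(μ t) ∫_{μ₀}^{μ t} 1/φ → 1/c`; one more application of l'Hôpital's rule, against
`log t`, gives `μ t / log t → 1/c`.
-/

section LHopital

variable {f g f' g' : ℝ → ℝ}

theorem eventually_div_lt_of_deriv_le_mul {b b' : ℝ}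
    (hf : ∀ᶠ x in atTop, HasDerivAt f (f' x) x) (hg : ∀ᶠ x in atTop, HasDerivAt g (g' x) x)
    (hle : ∀ᶠ x in atTop, f' x ≤ b * g' x) (hg_top : Tendsto g atTop atTop) (hb : b < b') :
    ∀ᶠ x in atTop, f x / g x < b' := by
  obtain ⟨X, hX⟩ := eventually_atTop.1 (hf.and (hg.and hle))
  have hmono : MonotoneOn (fun x => b * g x - f x) (Ici X) := by
    have hderiv : ∀ x ∈ Ici X, HasDerivAt (fun x => b * g x - f x) (b * g' x - f' x) x :=
      fun x hx => ((hX x hx).2.1.const_mul b).sub (hX x hx).1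
    refine monotoneOn_of_hasDerivWithinAt_nonneg (convex_Ici X)
      (fun x hx => (hderiv x hx).continuousAt.continuousWithinAt)
      (fun x hx => (hderiv x (interior_subset hx)).hasDerivWithinAt) fun x hx => ?_
    linarith [(hX x (interior_subset hx)).2.2]
  have hsmall : Tendsto (fun x => (f X - b * g X) / g x) atTop (𝓝 0) :=
    tendsto_const_nhds.div_atTop hg_top
  filter_upwards [eventually_ge_atTop X, hsmall.eventually (gt_mem_nhds (sub_pos.2 hb)),
    hg_top.eventually_gt_atTop 0] with x hx hsmall_x hgx
  have hfx : f x ≤ f X - b * g X + b * g x := by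
    linarith [hmono self_mem_Ici (mem_Ici.2 hx) hx]
  rw [div_lt_iff₀ hgx] at hsmall_x ⊢
  linarith

theorem tendsto_div_of_deriv_div_atTop {L : ℝ}
    (hf : ∀ᶠ x in atTop, HasDerivAt f (f' x) x) (hg : ∀ᶠ x in atTop, HasDerivAt g (g' x) x)
    (hg' : ∀ᶠ x in atTop, 0 < g' x) (hg_top : Tendsto g atTop atTop)
    (hlim : Tendsto (fun x => f' x / g' x) atTop (𝓝 L)) :
    Tendsto (fun x => f x / g x) atTop (𝓝 L) := by
  refine tendsto_order.2 ⟨fun a ha => ?_, fun b' hb' => ?_⟩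
  · obtain ⟨b, hab, hbL⟩ := exists_between ha
    have hle : ∀ᶠ x in atTop, -f' x ≤ -b * g' x := by
      filter_upwards [hg', hlim.eventually (lt_mem_nhds hbL)] with x hgx hx
      linarith [(lt_div_iff₀ hgx).1 hx]
    filter_upwards [eventually_div_lt_of_deriv_le_mul (hf.mono fun x hx => hx.neg) hg hle hg_top
      (neg_lt_neg hab)] with x hx
    rwa [Pi.neg_apply, neg_div, neg_lt_neg_iff] at hx
  · obtain ⟨b, hLb, hbb'⟩ := exists_between hb'
    refine eventually_div_lt_of_deriv_le_mul hf hg ?_ hg_top hbb'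
    filter_upwards [hg', hlim.eventually (gt_mem_nhds hLb)] with x hgx hx
    exact ((div_lt_iff₀ hgx).1 hx).le

end LHopital

section Tail

variable {g : ℝ → ℝ}

theorem integrableOn_Ioi_of_frequently_integral_ne_zero (hg : LocallyIntegrable g)
    (hne : ∃ᶠ y in atTop, ∫ u in Ioi y, g u ≠ 0) (x : ℝ) : IntegrableOn g (Ioi x) := by
  obtain ⟨y, hy, hxy⟩ := (hne.and_eventually (eventually_ge_atTop x)).exists
  rw [← Ioc_union_Ioi_eq_Ioi hxy]
  exact ((hg.integrableOn_isCompact isCompact_Icc).mono_set Ioc_subset_Icc_self).union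
    (Integrable.of_integral_ne_zero hy)

theorem integral_Ioi_pos (hpos : ∀ u, 0 < g u) {x : ℝ} (hint : IntegrableOn g (Ioi x)) :
    0 < ∫ u in Ioi x, g u := by
  rw [setIntegral_pos_iff_support_of_nonneg_ae (ae_of_all _ fun u => (hpos u).le) hint,
    Function.support_eq_univ fun u => (hpos u).ne', univ_inter, Real.volume_Ioi]
  exact ENNReal.zero_lt_top

theorem continuous_integral_Ioi (hint : ∀ x, IntegrableOn g (Ioi x)) :
    Continuous fun x => ∫ u in Ioi x, g u :=
  continuous_iff_continuousAt.2 fun x =>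
    ((hint (x - 1)).continuousOn_Ici_primitive_Ioi).continuousAt
      (Ici_mem_nhds (by linarith))

theorem hasDerivAt_integral_Ioi (hcont : Continuous g) (hint : ∀ x, IntegrableOn g (Ioi x))
    (x : ℝ) : HasDerivAt (fun y => ∫ u in Ioi y, g u) (-g x) x := by
  have hsplit : (fun y => ∫ u in Ioi y, g u) = fun y => (∫ u in Ioi x, g u) - ∫ u in x..y, g u :=
    funext fun y => by
      rw [← intervalIntegral.integral_Ioi_sub_Ioi' (hint x) (hint y), sub_sub_cancel]
  rw [hsplit]
  exact (hcont.integral_hasStrictDerivAt x x).hasDerivAt.const_sub _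

theorem tendsto_mul_integral_inv_of_tendsto_div_integral_Ioi (hcont : Continuous g)
    (hpos : ∀ x, 0 < g x) (hint : ∀ x, IntegrableOn g (Ioi x)) {c : ℝ} (hc : 0 < c)
    (hlim : Tendsto (fun x => g x / ∫ u in Ioi x, g u) atTop (𝓝 c)) (m : ℝ) :
    Tendsto (fun x => g x * ∫ u in m..x, (g u)⁻¹) atTop (𝓝 (1 / c)) := by
  set Ψ := fun x => ∫ u in Ioi x, g u
  have hlim : Tendsto (fun x => g x / Ψ x) atTop (𝓝 c) := hlim
  have hinv : Continuous fun u => (g u)⁻¹ := hcont.inv₀ fun u => (hpos u).ne'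
  have hΨpos : ∀ x, 0 < Ψ x := fun x => integral_Ioi_pos hpos (hint x)
  have hinvΨ : ∀ x, HasDerivAt (fun y => (Ψ y)⁻¹) (g x / Ψ x ^ 2) x := fun x =>
    ((hasDerivAt_integral_Ioi hcont hint x).inv (hΨpos x).ne').congr_deriv (by rw [neg_neg])
  have hinvΨ_top : Tendsto (fun x => (Ψ x)⁻¹) atTop atTop :=
    tendsto_inv_nhdsGT_zero.comp <| tendsto_nhdsWithin_iff.2
      ⟨tendsto_integral_Ioi_zero tendsto_id, .of_forall hΨpos⟩
  have hratio : Tendsto (fun x => (g x)⁻¹ / (g x / Ψ x ^ 2)) atTop (𝓝 (c⁻¹ ^ 2)) :=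
    ((hlim.inv₀ hc.ne').pow 2).congr fun x => by
      have := (hpos x).ne'; have := (hΨpos x).ne'; field_simp
  have hprod := (tendsto_div_of_deriv_div_atTop
    (.of_forall fun x => (hinv.integral_hasStrictDerivAt m x).hasDerivAt)
    (.of_forall hinvΨ) (.of_forall fun x => by have := hpos x; have := hΨpos x; positivity)
    hinvΨ_top hratio).mul hlim
  convert hprod using 1
  · funext x
    have := (hΨpos x).ne'
    field_simp
  · field_simp

end Tail

section SeparationOfVariables

variable {φ μ : ℝ → ℝ} {lam μ₀ : ℝ}

theorem integral_inv_comp_eq_mul (hcont : Continuous φ) (hpos : ∀ x, 0 < φ x)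
    (hinit : μ 0 = μ₀) (hode : ∀ t, 0 ≤ t → HasDerivAt μ (lam * φ (μ t)) t) {t : ℝ}
    (ht : 0 ≤ t) : ∫ u in μ₀..μ t, (φ u)⁻¹ = lam * t := by
  have hinv : Continuous fun u => (φ u)⁻¹ := hcont.inv₀ fun u => (hpos u).ne'
  have hderiv : ∀ s, 0 ≤ s →
      HasDerivAt (fun s => (∫ u in μ₀..μ s, (φ u)⁻¹) - lam * s) 0 s := fun s hs =>
    (((hinv.integral_hasStrictDerivAt μ₀ (μ s)).hasDerivAt.comp s (hode s hs)).sub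
      ((hasDerivAt_id s).const_mul lam)).congr_deriv
      (by rw [mul_left_comm, inv_mul_cancel₀ (hpos _).ne']; ring)
  have hconst := constant_of_has_deriv_right_zero
    (fun s hs => (hderiv s hs.1).continuousAt.continuousWithinAt)
    (fun s hs => (hderiv s hs.1).hasDerivWithinAt) t ⟨ht, le_rfl⟩
  simpa [hinit, sub_eq_zero] using hconst

theorem tendsto_atTop_of_hasDerivAt_mul_comp (hcont : Continuous φ) (hpos : ∀ x, 0 < φ x)
    (hlam : 0 < lam) (hinit : μ 0 = μ₀) (hode : ∀ t, 0 ≤ t → HasDerivAt μ (lam * φ (μ t)) t) :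
    Tendsto μ atTop atTop := by
  have hinv : Continuous fun u => (φ u)⁻¹ := hcont.inv₀ fun u => (hpos u).ne'
  have hI : StrictMono fun y => ∫ u in μ₀..y, (φ u)⁻¹ :=
    strictMono_of_hasDerivAt_pos (fun y => (hinv.integral_hasStrictDerivAt μ₀ y).hasDerivAt)
      fun y => inv_pos.2 (hpos y)
  refine tendsto_atTop.2 fun b => ?_
  filter_upwards [(tendsto_id.const_mul_atTop hlam).eventually_gt_atTop
    (∫ u in μ₀..b, (φ u)⁻¹), eventually_ge_atTop 0] with t hbt ht
  rw [id, ← integral_inv_comp_eq_mul hcont hpos hinit hode ht] at hbt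
  exact (hI.lt_iff_lt.1 hbt).le

end SeparationOfVariables

theorem stmt18_general {Ω : Type*} [MeasurableSpace Ω] (P : Measure Ω) [IsProbabilityMeasure P]
    (X : Ω → ℝ)
    (F : ℝ → ℝ) (hF : ∀ x, F x = (P {ω | X ω ≤ x}).toReal)
    (hub : ∀ x : ℝ, F x < 1)
    (φ : ℝ → ℝ) (hφ : ∀ x, φ x = ∫ u in Ioi x, (1 - F u))
    (hφint : ∀ x : ℝ, IntegrableOn φ (Ioi x))
    (c lam μ₀ : ℝ) (hc : 0 < c) (hlam : 0 < lam)
    (hlim : Tendsto (fun x => φ x / ∫ u in Ioi x, φ u) atTop (nhds c))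
    (μ : ℝ → ℝ) (hinit : μ 0 = μ₀)
    (hode : ∀ t : ℝ, 0 ≤ t → HasDerivAt μ (lam * φ (μ t)) t) :
    Tendsto (fun x => φ x * ∫ u in μ₀..x, (φ u)⁻¹) atTop (nhds (1 / c)) ∧
    Tendsto (fun t => t * (lam * φ (μ t))) atTop (nhds (1 / c)) ∧
    Tendsto (fun t => μ t / Real.log t) atTop (nhds (1 / c)) := by
  have hFmono : Monotone F := fun x y hxy => by
    rw [hF x, hF y]
    exact ENNReal.toReal_mono (measure_ne_top P _) (measure_mono fun ω h => le_trans h hxy)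
  -- otherwise `φ` would be the junk value `0` far out, contradicting `hlim`
  have hGint : ∀ x, IntegrableOn (fun u => 1 - F u) (Ioi x) :=
    integrableOn_Ioi_of_frequently_integral_ne_zero
      (Antitone.locallyIntegrable fun x y hxy => sub_le_sub_left (hFmono hxy) 1)
      ((hlim.eventually_ne hc.ne').mono fun x hx => by
        rw [← hφ x]; exact (div_ne_zero_iff.1 hx).1).frequently
  have hφpos : ∀ x, 0 < φ x := fun x => by
    rw [hφ x]; exact integral_Ioi_pos (fun u => sub_pos.2 (hub u)) (hGint x)
  have hφcont : Continuous φ := by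
    rw [funext hφ]; exact continuous_integral_Ioi hGint
  have part1 := tendsto_mul_integral_inv_of_tendsto_div_integral_Ioi hφcont hφpos hφint hc hlim μ₀
  have part2 : Tendsto (fun t => t * (lam * φ (μ t))) atTop (𝓝 (1 / c)) :=
    (part1.comp (tendsto_atTop_of_hasDerivAt_mul_comp hφcont hφpos hlam hinit hode)).congr'
      (by filter_upwards [eventually_ge_atTop 0] with t ht
          rw [Function.comp_apply, integral_inv_comp_eq_mul hφcont hφpos hinit hode ht]; ring)
  refine ⟨part1, part2, tendsto_div_of_deriv_div_atTop
    ((eventually_ge_atTop 0).mono hode) ?_ ((eventually_gt_atTop 0).mono fun t ht => inv_pos.2 ht)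
    Real.tendsto_log_atTop (part2.congr fun t => by rw [div_inv_eq_mul, mul_comm])⟩
  filter_upwards [eventually_gt_atTop 0] with t ht
  exact Real.hasDerivAt_log ht.ne'

/-- if M = +∞ and φ(x)/∫_x^∞ φ(u)du → c > 0 as x → ∞, then
φ(x)·∫_{μ₀}^x du/φ(u) → 1/c; consequently t·μ'(t) → 1/c and μ(t)/ln t → 1/c. -/
theorem stmt18 {Ω : Type*} [MeasurableSpace Ω] (P : Measure Ω) [IsProbabilityMeasure P]
    (X : Ω → ℝ) (hX : Measurable X)
    (hint : Integrable (fun ω => max (X ω) 0) P)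
    (F : ℝ → ℝ) (hF : ∀ x, F x = (P {ω | X ω ≤ x}).toReal)
    (hub : ∀ x : ℝ, F x < 1)
    (φ : ℝ → ℝ) (hφ : ∀ x, φ x = ∫ u in Ioi x, (1 - F u))
    (hφint : ∀ x : ℝ, IntegrableOn φ (Ioi x))
    (c lam μ₀ : ℝ) (hc : 0 < c) (hlam : 0 < lam) (hμ₀ : 0 ≤ μ₀)
    (hlim : Tendsto (fun x => φ x / ∫ u in Ioi x, φ u) atTop (nhds c))
    (μ : ℝ → ℝ) (hinit : μ 0 = μ₀)
    (hode : ∀ t : ℝ, 0 ≤ t → HasDerivAt μ (lam * φ (μ t)) t) :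
    Tendsto (fun x => φ x * ∫ u in μ₀..x, (φ u)⁻¹) atTop (nhds (1 / c)) ∧
    Tendsto (fun t => t * (lam * φ (μ t))) atTop (nhds (1 / c)) ∧
    Tendsto (fun t => μ t / Real.log t) atTop (nhds (1 / c)) :=
  stmt18_general P X F hF hub φ hφ hφint c lam μ₀ hc hlam hlim μ hinit hode
end
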